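/- If ν̃ ∈ H₁⁺(μ̃)_{−1}, then the function ν defined on ⊔ₙ 𝔷ₙ by ν(z) := (κ-dim(z)/dim(z))·ν̃(z,1) belongs to H₁⁺(κ). -/

import Mathlib

open scoped BigOperators Classical ENNReal

universe u

variable {Z : ℕ → Type u}

/-- A path in the branching graph ending at the vertex `z` of level `n`:
it records vertices `z₀,…,zₙ` with `zₙ = z` and `κ(z_{k+1}, z_k) > 0` for all `k`.
(At level `0` the vertex is forced since `Z 0` is a singleton.) -/
structure BPath (κ : ∀ n, Z (n + 1) → Z n → ℝ) {n : ℕ} (z : Z n) where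
  pt : ∀ k : Fin (n + 1), Z k
  last : pt (Fin.last n) = z
  pos : ∀ k : Fin n, 0 < κ k (pt k.succ) (pt k.castSucc)

/-- `dim z`: the number of paths to `z`. -/
noncomputable def bdim (κ : ∀ n, Z (n + 1) → Z n → ℝ) {n : ℕ} (z : Z n) : ℕ :=
  Nat.card (BPath κ z)

/-- The `κ`-dimension `κ-dim(z)`. -/
noncomputable def kdim (κ : ∀ n, Z (n + 1) → Z n → ℝ) {n : ℕ} (z : Z n) : ℝ :=
  Real.sqrt (∑' p : BPath κ z, ∏ k : Fin n, (κ k (p.pt k.succ) (p.pt k.castSucc))⁻¹)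

/-- The weight `ρ(z, z')`. -/
noncomputable def wrho (κ : ∀ n, Z (n + 1) → Z n → ℝ) {n : ℕ} (z : Z (n + 1)) (z' : Z n) : ℝ :=
  kdim κ z * κ n z z' / kdim κ z'

/-- The weight group `Γ(κ)`: the subgroup of `ℝˣ` generated by the positive weights. -/
noncomputable def weightGroup (κ : ∀ n, Z (n + 1) → Z n → ℝ) : Subgroup ℝˣ :=
  Subgroup.closure
    {γ : ℝˣ | ∃ (n : ℕ) (z : Z (n + 1)) (z' : Z n), 0 < κ n z z' ∧ (γ : ℝ) = wrho κ z z'}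

/-- The multiplicity function `m̃` of the weight-extended branching graph. -/
noncomputable def mtilde (κ : ∀ n, Z (n + 1) → Z n → ℝ) {n : ℕ}
    (p : Z (n + 1) × ℝˣ) (p' : Z n × ℝˣ) : ℕ :=
  if 0 < κ n p.1 p'.1 ∧ ((p.2⁻¹ * p'.2 : ℝˣ) : ℝ) = wrho κ p.1 p'.1 then 1 else 0

/-- The standard link `μ̃` of the weight-extended branching graph. -/
noncomputable def mutilde (κ : ∀ n, Z (n + 1) → Z n → ℝ) {n : ℕ}
    (p : Z (n + 1) × ℝˣ) (p' : Z n × ℝˣ) : ℝ :=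
  (mtilde κ p p' : ℝ) * (bdim κ p'.1 : ℝ) / (bdim κ p.1 : ℝ)

/-- `ν ∈ H₁⁺(κ)`: nonnegative, normalized at the root, and `κ`-harmonic
(the defining sums converging). -/
def memH1 (κ : ∀ n, Z (n + 1) → Z n → ℝ) [Unique (Z 0)] (ν : ∀ n, Z n → ℝ) : Prop :=
  (∀ (n : ℕ) (z : Z n), 0 ≤ ν n z) ∧ ν 0 default = 1 ∧
    ∀ (n : ℕ) (z' : Z n), HasSum (fun z : Z (n + 1) => ν (n + 1) z * κ n z z') (ν n z')

/-- `ν̃ ∈ H₁⁺(μ̃)_{−1}`: a nonnegative, normalized, `(−1)`-power scaling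
`μ̃`-harmonic function on the weight-extended branching graph. -/
def memH1T (κ : ∀ n, Z (n + 1) → Z n → ℝ) [Unique (Z 0)]
    (νt : ∀ n, Z n → ↥(weightGroup κ) → ℝ) : Prop :=
  (∀ (n : ℕ) (z : Z n) (γ : ↥(weightGroup κ)), 0 ≤ νt n z γ) ∧
  (∀ (n : ℕ) (z' : Z n) (γ' : ↥(weightGroup κ)),
      HasSum
        (fun p : Z (n + 1) × ↥(weightGroup κ) =>
          νt (n + 1) p.1 p.2 * mutilde κ (p.1, (p.2 : ℝˣ)) (z', (γ' : ℝˣ)))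
        (νt n z' γ')) ∧
  (∀ (n : ℕ) (z : Z n) (γ : ↥(weightGroup κ)), νt n z γ = (((γ : ℝˣ) : ℝ))⁻¹ * νt n z 1) ∧
  νt 0 default 1 = 1

theorem bpath_ext {κ : ∀ n, Z (n + 1) → Z n → ℝ} {n : ℕ} {z : Z n}
    {p q : BPath κ z} (h : p.pt = q.pt) : p = q := by
  cases p; cases q; cases h; rfl

theorem bpath_zero_subsingleton (κ : ∀ n, Z (n + 1) → Z n → ℝ) (z : Z 0) :
    Subsingleton (BPath κ z) := by
  constructor
  intro p q
  apply bpath_ext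
  funext k
  have hk : k = Fin.last 0 := Fin.ext (by omega)
  subst hk
  rw [p.last, q.last]

theorem bpath_zero_nonempty (κ : ∀ n, Z (n + 1) → Z n → ℝ) (z : Z 0) :
    Nonempty (BPath κ z) :=
  ⟨⟨Fin.lastCases z (fun i => i.elim0), Fin.lastCases_last, fun k => k.elim0⟩⟩

/-- The vertex family of the extension of a path by one more edge. -/
def extPt {κ : ∀ n, Z (n + 1) → Z n → ℝ} {n : ℕ} {z' : Z n}
    (z : Z (n + 1)) (q : BPath κ z') : ∀ k : Fin (n + 1 + 1), Z k :=
  Fin.lastCases z (fun i => q.pt i)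

theorem extPt_last {κ : ∀ n, Z (n + 1) → Z n → ℝ} {n : ℕ} {z' : Z n}
    (z : Z (n + 1)) (q : BPath κ z') : extPt z q (Fin.last (n + 1)) = z :=
  Fin.lastCases_last

theorem extPt_castSucc {κ : ∀ n, Z (n + 1) → Z n → ℝ} {n : ℕ} {z' : Z n}
    (z : Z (n + 1)) (q : BPath κ z') (i : Fin (n + 1)) :
    extPt z q (Fin.castSucc i) = q.pt i := by
  unfold extPt
  apply Fin.lastCases_castSucc

/-- Extend a path to `z' : Z n` by an edge `(z, z')` with positive `κ`. -/
def BPath.extend {κ : ∀ n, Z (n + 1) → Z n → ℝ} {n : ℕ} {z : Z (n + 1)} {z' : Z n}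
    (h : 0 < κ n z z') (q : BPath κ z') : BPath κ z where
  pt := extPt z q
  last := extPt_last z q
  pos := by
    intro k
    refine Fin.lastCases ?_ ?_ k
    · have e1 : extPt z q ((Fin.last n).succ) = z := extPt_last z q
      have e2 : extPt z q ((Fin.last n).castSucc) = z' :=
        (extPt_castSucc z q (Fin.last n)).trans q.last
      rw [e1, e2]
      exact h
    · intro j
      have e3 : extPt z q ((j.castSucc).succ) = q.pt j.succ := extPt_castSucc z q j.succ
      have e4 : extPt z q ((j.castSucc).castSucc) = q.pt j.castSucc :=
        extPt_castSucc z q j.castSucc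
      rw [e3, e4]
      exact q.pos j

theorem BPath.pos_top {κ : ∀ n, Z (n + 1) → Z n → ℝ} {n : ℕ} {z : Z (n + 1)}
    (p : BPath κ z) : 0 < κ n z (p.pt (Fin.castSucc (Fin.last n))) := by
  have h2 := p.pos (Fin.last n)
  have e : p.pt ((Fin.last n).succ) = z := p.last
  rw [e] at h2
  exact h2

/-- Restrict a path to `z : Z (n+1)` to a path to its penultimate vertex. -/
def BPath.restrict {κ : ∀ n, Z (n + 1) → Z n → ℝ} {n : ℕ} {z : Z (n + 1)}
    (p : BPath κ z) : BPath κ (p.pt (Fin.castSucc (Fin.last n))) where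
  pt := fun k => p.pt k.castSucc
  last := rfl
  pos := fun k => p.pos k.castSucc

theorem bpath_finite (κ : ∀ n, Z (n + 1) → Z n → ℝ)
    (hfin : ∀ (n : ℕ) (z : Z (n + 1)), {z' : Z n | 0 < κ n z z'}.Finite) :
    ∀ (n : ℕ) (z : Z n), Finite (BPath κ z) := by
  intro n
  induction n with
  | zero =>
    intro z
    haveI := bpath_zero_subsingleton κ z
    exact Finite.of_subsingleton
  | succ n ih =>
    intro z
    haveI : Finite {z' : Z n // 0 < κ n z z'} := (hfin n z).to_subtype
    haveI : ∀ z' : {z' : Z n // 0 < κ n z z'}, Finite (BPath κ z'.val) :=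
      fun z' => ih z'.val
    apply Finite.of_injective (fun p : BPath κ z =>
      (⟨⟨p.pt (Fin.castSucc (Fin.last n)), p.pos_top⟩, p.restrict⟩ :
        Σ z' : {z' : Z n // 0 < κ n z z'}, BPath κ z'.val))
    intro p q h
    have h2 : ∀ k : Fin (n + 1), p.pt k.castSucc = q.pt k.castSucc := by
      intro k
      exact congrArg
        (fun s : (Σ z' : {z' : Z n // 0 < κ n z z'}, BPath κ z'.val) => s.2.pt k) h
    apply bpath_ext
    funext k
    refine Fin.lastCases ?_ (fun i => h2 i) k
    have e1 : p.pt (Fin.last (n + 1)) = z := p.last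
    have e2 : q.pt (Fin.last (n + 1)) = z := q.last
    rw [e1, e2]

theorem bpath_nonempty (κ : ∀ n, Z (n + 1) → Z n → ℝ)
    (hκ01 : ∀ (n : ℕ) (z : Z (n + 1)) (z' : Z n), κ n z z' ∈ Set.Icc (0 : ℝ) 1)
    (hrow : ∀ (n : ℕ) (z : Z (n + 1)), HasSum (fun z' : Z n => κ n z z') 1) :
    ∀ (n : ℕ) (z : Z n), Nonempty (BPath κ z) := by
  intro n
  induction n with
  | zero => exact fun z => bpath_zero_nonempty κ z
  | succ n ih =>
    intro z
    obtain ⟨z', hz'⟩ : ∃ z', 0 < κ n z z' := by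
      by_contra hne
      push_neg at hne
      have h0 : (fun z' : Z n => κ n z z') = fun _ => (0 : ℝ) :=
        funext fun z' => le_antisymm (hne z') (hκ01 n z z').1
      have h1 := hrow n z
      rw [h0] at h1
      exact one_ne_zero (h1.unique hasSum_zero)
    obtain ⟨q⟩ := ih z'
    exact ⟨BPath.extend hz' q⟩

theorem kdim_pos (κ : ∀ n, Z (n + 1) → Z n → ℝ)
    (hκ01 : ∀ (n : ℕ) (z : Z (n + 1)) (z' : Z n), κ n z z' ∈ Set.Icc (0 : ℝ) 1)
    (hrow : ∀ (n : ℕ) (z : Z (n + 1)), HasSum (fun z' : Z n => κ n z z') 1)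
    (hfin : ∀ (n : ℕ) (z : Z (n + 1)), {z' : Z n | 0 < κ n z z'}.Finite)
    {n : ℕ} (z : Z n) : 0 < kdim κ z := by
  haveI := bpath_finite κ hfin n z
  haveI := bpath_nonempty κ hκ01 hrow n z
  haveI : Fintype (BPath κ z) := Fintype.ofFinite _
  rw [kdim, Real.sqrt_pos, tsum_fintype]
  apply Finset.sum_pos
  · intro p _
    exact Finset.prod_pos fun k _ => inv_pos.mpr (p.pos k)
  · exact Finset.univ_nonempty

theorem bdim_pos (κ : ∀ n, Z (n + 1) → Z n → ℝ)
    (hκ01 : ∀ (n : ℕ) (z : Z (n + 1)) (z' : Z n), κ n z z' ∈ Set.Icc (0 : ℝ) 1)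
    (hrow : ∀ (n : ℕ) (z : Z (n + 1)), HasSum (fun z' : Z n => κ n z z') 1)
    (hfin : ∀ (n : ℕ) (z : Z (n + 1)), {z' : Z n | 0 < κ n z z'}.Finite)
    {n : ℕ} (z : Z n) : 0 < (bdim κ z : ℝ) := by
  haveI := bpath_finite κ hfin n z
  haveI := bpath_nonempty κ hκ01 hrow n z
  rw [bdim]
  exact_mod_cast Nat.card_pos

theorem kdim_zero (κ : ∀ n, Z (n + 1) → Z n → ℝ) (z : Z 0) : kdim κ z = 1 := by
  haveI := bpath_zero_subsingleton κ z
  obtain ⟨p⟩ := bpath_zero_nonempty κ z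
  rw [kdim, tsum_eq_single p (fun b hb => (hb (Subsingleton.elim b p)).elim)]
  simp

theorem bdim_zero (κ : ∀ n, Z (n + 1) → Z n → ℝ) (z : Z 0) : bdim κ z = 1 := by
  haveI := bpath_zero_subsingleton κ z
  rw [bdim, Nat.card_eq_one_iff_unique]
  exact ⟨inferInstance, bpath_zero_nonempty κ z⟩


theorem stmt9     [∀ n, Countable (Z n)] [Unique (Z 0)]
    (κ : ∀ n, Z (n + 1) → Z n → ℝ)
    (hκ01 : ∀ (n : ℕ) (z : Z (n + 1)) (z' : Z n), κ n z z' ∈ Set.Icc (0 : ℝ) 1)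
    (hrow : ∀ (n : ℕ) (z : Z (n + 1)), HasSum (fun z' : Z n => κ n z z') 1)
    (hsupp : ∀ (n : ℕ) (z' : Z n), ∃ z : Z (n + 1), 0 < κ n z z')
    (hfin : ∀ (n : ℕ) (z : Z (n + 1)), {z' : Z n | 0 < κ n z z'}.Finite)
    (νt : ∀ n, Z n → ↥(weightGroup κ) → ℝ) (hνt : memH1T κ νt) :
    memH1 κ (fun n z => kdim κ z / (bdim κ z : ℝ) * νt n z 1) := by
  obtain ⟨hpos, hharm, hscale, hroot⟩ := hνt
  have hkd : ∀ {n : ℕ} (z : Z n), 0 < kdim κ z := fun {n} z => kdim_pos κ hκ01 hrow hfin z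
  have hbd : ∀ {n : ℕ} (z : Z n), 0 < (bdim κ z : ℝ) := fun {n} z => bdim_pos κ hκ01 hrow hfin z
  refine ⟨?_, ?_, ?_⟩
  · intro n z
    have h1 : 0 ≤ kdim κ z := le_of_lt (hkd z)
    exact mul_nonneg (div_nonneg h1 (Nat.cast_nonneg _)) (hpos n z 1)
  · show kdim κ (default : Z 0) / ((bdim κ (default : Z 0) : ℕ) : ℝ) * νt 0 default 1 = 1
    rw [kdim_zero, bdim_zero, hroot]
    norm_num
  · intro n z'
    have hkz' : kdim κ z' ≠ 0 := ne_of_gt (hkd z')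
    have hbz' : (bdim κ z' : ℝ) ≠ 0 := ne_of_gt (hbd z')
    have hwpos : ∀ z : Z (n + 1), 0 < κ n z z' → 0 < wrho κ z z' := fun z hz =>
      div_pos (mul_pos (hkd z) hz) (hkd z')
    have hwmem : ∀ (z : Z (n + 1)) (hz : 0 < κ n z z'),
        Units.mk0 (wrho κ z z') (ne_of_gt (hwpos z hz)) ∈ weightGroup κ := fun z hz =>
      Subgroup.subset_closure ⟨n, z, z', hz, rfl⟩
    set i : Z (n + 1) → Z (n + 1) × ↥(weightGroup κ) := fun z =>
      if hz : 0 < κ n z z' then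
        (z, (⟨Units.mk0 (wrho κ z z') (ne_of_gt (hwpos z hz)), hwmem z hz⟩ :
          ↥(weightGroup κ))⁻¹)
      else (z, 1) with hidef
    have hi1 : ∀ z, (i z).1 = z := by
      intro z
      simp only [hidef]
      split <;> rfl
    have hinj : Function.Injective i := by
      intro a b h
      have h2 := congrArg Prod.fst h
      rwa [hi1, hi1] at h2
    set f : Z (n + 1) × ↥(weightGroup κ) → ℝ := fun p =>
      νt (n + 1) p.1 p.2 *
        mutilde κ (p.1, (p.2 : ℝˣ)) (z', ((1 : ↥(weightGroup κ)) : ℝˣ)) with hfdef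
    have hsum : HasSum f (νt n z' 1) := hharm n z' 1
    have hvan : ∀ p, p ∉ Set.range i → f p = 0 := by
      rintro ⟨p1, p2⟩ hp
      by_contra hne
      apply hp
      have hmt : mtilde κ (p1, (p2 : ℝˣ)) (z', ((1 : ↥(weightGroup κ)) : ℝˣ)) ≠ 0 := by
        intro h0
        apply hne
        show νt (n + 1) p1 p2 * mutilde κ (p1, (p2 : ℝˣ)) (z', ((1 : ↥(weightGroup κ)) : ℝˣ)) = 0
        rw [mutilde]
        simp only at h0 ⊢
        rw [h0]
        simp
      rw [mtilde] at hmt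
      split_ifs at hmt with hc
      swap
      · exact absurd rfl hmt
      obtain ⟨hcκ, hcρ⟩ := hc
      refine ⟨p1, ?_⟩
      simp only [hidef]
      rw [dif_pos hcκ]
      have hval : (((p2 : ℝˣ) : ℝ))⁻¹ = wrho κ p1 z' := by
        have : ((((p2 : ℝˣ))⁻¹ * ((1 : ↥(weightGroup κ)) : ℝˣ) : ℝˣ) : ℝ) = wrho κ p1 z' := hcρ
        simpa using this
      have hu : ((p2 : ℝˣ))⁻¹ = Units.mk0 (wrho κ p1 z') (ne_of_gt (hwpos p1 hcκ)) :=
        Units.ext (by simpa using hval)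
      have h2 : (Units.mk0 (wrho κ p1 z') (ne_of_gt (hwpos p1 hcκ)))⁻¹ = (p2 : ℝˣ) := by
        rw [← hu, inv_inv]
      exact Prod.ext rfl (Subtype.ext h2)
    have hsum2 : HasSum (f ∘ i) (νt n z' 1) := (hinj.hasSum_iff hvan).mpr hsum
    have hkey : ∀ z : Z (n + 1),
        kdim κ z / (bdim κ z : ℝ) * νt (n + 1) z 1 * κ n z z'
          = kdim κ z' / (bdim κ z' : ℝ) * (f ∘ i) z := by
      intro z
      by_cases hz : 0 < κ n z z'
      · have hiz : i z = (z, (⟨Units.mk0 (wrho κ z z') (ne_of_gt (hwpos z hz)),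
            hwmem z hz⟩ : ↥(weightGroup κ))⁻¹) := by
          simp only [hidef]
          rw [dif_pos hz]
        set γ : ↥(weightGroup κ) := (⟨Units.mk0 (wrho κ z z') (ne_of_gt (hwpos z hz)),
            hwmem z hz⟩ : ↥(weightGroup κ))⁻¹ with hγdef
        have hγval : (((γ : ℝˣ) : ℝ)) = (wrho κ z z')⁻¹ := rfl
        have hmt1 : mtilde κ (z, (γ : ℝˣ)) (z', ((1 : ↥(weightGroup κ)) : ℝˣ)) = 1 := by
          rw [mtilde, if_pos]
          refine ⟨hz, ?_⟩
          show ((((γ : ℝˣ))⁻¹ * ((1 : ↥(weightGroup κ)) : ℝˣ) : ℝˣ) : ℝ) = wrho κ z z'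
          have : ((γ : ℝˣ))⁻¹ = Units.mk0 (wrho κ z z') (ne_of_gt (hwpos z hz)) := by
            rw [hγdef]
            simp
          rw [this]
          simp
        have hfz : (f ∘ i) z = wrho κ z z' * νt (n + 1) z 1 *
            ((bdim κ z' : ℝ) / (bdim κ z : ℝ)) := by
          show f (i z) = _
          rw [hiz, hfdef]
          simp only
          rw [mutilde]
          simp only
          rw [hmt1, hscale (n + 1) z γ, hγval, inv_inv]
          ring
        rw [hfz, wrho]
        have hbz : (bdim κ z : ℝ) ≠ 0 := ne_of_gt (hbd z)
        field_simp
      · have hz0 : κ n z z' = 0 := le_antisymm (not_lt.mp hz) (hκ01 n z z').1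
        have hiz : i z = (z, 1) := by
          simp only [hidef]
          rw [dif_neg hz]
        have hmt0 : mtilde κ (z, ((1 : ↥(weightGroup κ)) : ℝˣ))
            (z', ((1 : ↥(weightGroup κ)) : ℝˣ)) = 0 := by
          rw [mtilde, if_neg]
          intro hc
          exact hz hc.1
        have hfz : (f ∘ i) z = 0 := by
          show f (i z) = 0
          rw [hiz, hfdef]
          simp only
          rw [mutilde]
          simp only
          rw [hmt0]
          simp
        rw [hfz, hz0]
        ring
    show HasSum (fun z : Z (n + 1) =>
        kdim κ z / (bdim κ z : ℝ) * νt (n + 1) z 1 * κ n z z')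
      (kdim κ z' / (bdim κ z' : ℝ) * νt n z' 1)
    rw [funext hkey]
    exact hsum2.mul_left _
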